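/- arXiv:1208.5377 — 5 statements merged into one kernel-verified Lean document; each statement's English description precedes it below -/
import Mathlib

section
/- Let $(a_n)_{n\ge1}$ be complex numbers, $\alpha,\beta,x$ real with $\alpha\ne0$, such that the series $f_1(x)=\sum_{n=1}^\infty a_n e^{i(\alpha n+\beta)x}$ converges, and let $r_1,\dots,r_p$ be complex numbers with $r_je^{i\alpha x}\ne1$ for $j=1,\dots,p$. Then the series $\sum_{n=1}^\infty L_{r_1\dots r_p}(a_n)e^{i(\alpha(n+p)+\beta)x}$ converges and $f_1(x)=\frac{a_1e^{i(\alpha+\beta)x}}{1-r_1e^{i\alpha x}} + \sum_{k=1}^{p-1}L_{r_1\dots r_k}(a_1)\frac{e^{i(\alpha(k+1)+\beta)x}}{(1-r_1e^{i\alpha x})\cdots(1-r_{k+1}e^{i\alpha x})} + \frac{1}{(1-r_1e^{i\alpha x})\cdots(1-r_pe^{i\alpha x})}\sum_{n=1}^\infty L_{r_1\dots r_p}(a_n)e^{i(\alpha(n+p)+\beta)x}.$ -/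
/-!
Multiplying the sequence by the geometric weights `e ^ n * c`, with `e = exp (i α x)` and
`c = exp (i β x)`, turns `L_{r_1 … r_p}` into `L_{r_1 e … r_p e}`, so it suffices to treat the
unweighted series `∑ b_{n+1}`. There each application of `L_ρ` is a summation by parts:
if `∑ u_n → T` then `∑ (u_{n+1} - ρ u_n) → (1 - ρ) T - u_0`. Solving for `T`, which needs
`ρ ≠ 1`, and iterating `p` times gives the expansion.
-/

open Filter Finset

/-- `Lop r p a n = L_{r_1 … r_p}(a_n)`. -/
noncomputable def Lop (r : ℕ → ℂ) : ℕ → (ℕ → ℂ) → ℕ → ℂ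
  | 0 => fun a n => a n
  | p + 1 => fun a n => Lop r p a (n + 1) - r (p + 1) * Lop r p a n

open Topology

theorem tendsto_sum_range_sub_mul {R : Type*} [Ring R] [TopologicalSpace R] [IsTopologicalRing R]
    {u : ℕ → R} {T : R} (ρ : R) (hT : Tendsto (fun N => ∑ n ∈ range N, u n) atTop (𝓝 T)) :
    Tendsto (fun N => ∑ n ∈ range N, (u (n + 1) - ρ * u n)) atTop (𝓝 ((1 - ρ) * T - u 0)) := by
  have hshift : Tendsto (fun N => ∑ n ∈ range (N + 1), u n) atTop (𝓝 T) :=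
    hT.comp (tendsto_add_atTop_nat 1)
  convert (hshift.sub_const (u 0)).sub (hT.const_mul ρ) using 1
  · ext N
    rw [sum_sub_distrib, ← mul_sum, sum_range_succ']
    abel
  · noncomm_ring

theorem Lop_mul_pow (r : ℕ → ℂ) (a : ℕ → ℂ) (e c : ℂ) (p n : ℕ) :
    Lop (fun j => r j * e) p (fun m => a m * e ^ m * c) n = Lop r p a n * e ^ (n + p) * c := by
  induction p generalizing n with
  | zero => rfl
  | succ p ih =>
    simp only [Lop, ih]
    ring

theorem exists_tendsto_sum_Lop {r : ℕ → ℂ} {b : ℕ → ℂ} {p : ℕ}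
    (hr : ∀ j, 1 ≤ j → j ≤ p → r j ≠ 1) {S : ℂ}
    (hS : Tendsto (fun N => ∑ n ∈ range N, b (n + 1)) atTop (𝓝 S)) :
    ∃ T, Tendsto (fun N => ∑ n ∈ range N, Lop r p b (n + 1)) atTop (𝓝 T) ∧
      S = ∑ k ∈ range p, Lop r k b 1 / ∏ j ∈ Icc 1 (k + 1), (1 - r j)
        + (∏ j ∈ Icc 1 p, (1 - r j))⁻¹ * T := by
  induction p with
  | zero => exact ⟨S, hS, by simp⟩
  | succ p ih =>
    obtain ⟨T, hT, hST⟩ := ih fun j hj hjp => hr j hj (hjp.trans p.le_succ)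
    refine ⟨(1 - r (p + 1)) * T - Lop r p b 1, tendsto_sum_range_sub_mul _ hT, ?_⟩
    have hlast : 1 - r (p + 1) ≠ 0 := sub_ne_zero.mpr (hr _ (Nat.le_add_left 1 p) le_rfl).symm
    have hprod : ∏ j ∈ Icc 1 p, (1 - r j) ≠ 0 := prod_ne_zero_iff.mpr fun j hj =>
      sub_ne_zero.mpr (hr j (mem_Icc.mp hj).1 ((mem_Icc.mp hj).2.trans p.le_succ)).symm
    rw [hST, sum_range_succ, prod_Icc_succ_top (Nat.le_add_left 1 p)]
    field_simp
    ring

theorem stmt_7_general (a : ℕ → ℂ) (α β x : ℝ) (p : ℕ) (hp : 1 ≤ p)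
    (r : ℕ → ℂ)
    (hr : ∀ j, 1 ≤ j → j ≤ p → r j * Complex.exp ((α * x) * Complex.I) ≠ 1)
    (S : ℂ)
    (hS : Tendsto (fun N => ∑ n ∈ range N,
      a (n + 1) * Complex.exp (((α * ((n : ℝ) + 1) + β) * x) * Complex.I)) atTop (nhds S)) :
    ∃ T : ℂ,
      Tendsto (fun N => ∑ n ∈ range N,
        Lop r p a (n + 1) *
          Complex.exp (((α * (((n : ℝ) + 1) + (p : ℝ)) + β) * x) * Complex.I)) atTop (nhds T) ∧
      S = a 1 * Complex.exp (((α + β) * x) * Complex.I) /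
            (1 - r 1 * Complex.exp ((α * x) * Complex.I))
        + ∑ k ∈ Finset.Icc 1 (p - 1),
            Lop r k a 1 * Complex.exp (((α * ((k : ℝ) + 1) + β) * x) * Complex.I) /
              ∏ j ∈ Finset.Icc 1 (k + 1), (1 - r j * Complex.exp ((α * x) * Complex.I))
        + (∏ j ∈ Finset.Icc 1 p, (1 - r j * Complex.exp ((α * x) * Complex.I)))⁻¹ * T := by
  set e := Complex.exp (α * x * Complex.I)
  set c := Complex.exp (β * x * Complex.I)
  -- `t` is free so that `hexp` rewrites every cast form of `m` occurring in the statement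
  have hexp (m : ℕ) (t : ℂ) (ht : t = m) :
      Complex.exp ((α * t + β) * x * Complex.I) = e ^ m * c := by
    rw [ht, ← Complex.exp_nat_mul, ← Complex.exp_add]
    ring_nf
  obtain ⟨T, hT, hST⟩ := exists_tendsto_sum_Lop hr (b := fun m => a m * e ^ m * c) (S := S) <| by
    refine hS.congr fun N => sum_congr rfl fun n _ => ?_
    rw [hexp (n + 1) _ (by push_cast; ring), mul_assoc]
  refine ⟨T, ?_, ?_⟩
  · refine hT.congr fun N => sum_congr rfl fun n _ => ?_
    rw [Lop_mul_pow, hexp (n + 1 + p) _ (by push_cast; ring), mul_assoc]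
  · have hfirst : Complex.exp ((α + β) * x * Complex.I) = e * c := by
      simpa using hexp 1 1 Nat.cast_one.symm
    rw [hST, sum_range_eq_add_Ico _ hp,
      Icc_sub_one_right_eq_Ico_of_not_isMin (by simpa using Nat.one_le_iff_ne_zero.mp hp),
      Lop_mul_pow, Icc_self, prod_singleton, hfirst]
    congr 2
    · rw [Lop, add_zero, pow_one, mul_assoc]
    · refine sum_congr rfl fun k _ => ?_
      rw [Lop_mul_pow, hexp (1 + k) _ (by push_cast; ring), mul_assoc]

theorem stmt_7 (a : ℕ → ℂ) (α β x : ℝ) (hα : α ≠ 0) (p : ℕ) (hp : 1 ≤ p)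
    (r : ℕ → ℂ)
    (hr : ∀ j, 1 ≤ j → j ≤ p → r j * Complex.exp ((α * x) * Complex.I) ≠ 1)
    (S : ℂ)
    (hS : Tendsto (fun N => ∑ n ∈ range N,
      a (n + 1) * Complex.exp (((α * ((n : ℝ) + 1) + β) * x) * Complex.I)) atTop (nhds S)) :
    ∃ T : ℂ,
      Tendsto (fun N => ∑ n ∈ range N,
        Lop r p a (n + 1) *
          Complex.exp (((α * (((n : ℝ) + 1) + (p : ℝ)) + β) * x) * Complex.I)) atTop (nhds T) ∧
      S = a 1 * Complex.exp (((α + β) * x) * Complex.I) /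
            (1 - r 1 * Complex.exp ((α * x) * Complex.I))
        + ∑ k ∈ Finset.Icc 1 (p - 1),
            Lop r k a 1 * Complex.exp (((α * ((k : ℝ) + 1) + β) * x) * Complex.I) /
              ∏ j ∈ Finset.Icc 1 (k + 1), (1 - r j * Complex.exp ((α * x) * Complex.I))
        + (∏ j ∈ Finset.Icc 1 p, (1 - r j * Complex.exp ((α * x) * Complex.I)))⁻¹ * T :=
  stmt_7_general a α β x p hp r hr S hS
end

section
/- Let $(a_n)_{n\ge1}$ be complex numbers, $\alpha,\beta,x$ real, such that the series $\sum_{n=1}^\infty a_n e^{i(\alpha n+\beta)x}$ converges, and for $m\ge0$ let $\rho_m=\sum_{n=m+1}^\infty a_n e^{i(\alpha n+\beta)x}$ denote its tails. Let $r_1,\dots,r_p$ be complex numbers and $E_k$ the $k$-th elementary symmetric polynomial in $r_1,\dots,r_p$. Then $\sum_{n=1}^\infty L_{r_1\dots r_p}(a_n)\,e^{i(\alpha(n+p)+\beta)x} = \sum_{k=0}^p(-1)^{p-k}e^{i\alpha(p-k)x}E_{p-k}\,\rho_k.$ -/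
open Filter Finset

/-!
`L_{r_1 … r_p}` is the operator `(S - r_p) ⋯ (S - r_1)`, where `S` is the shift `a_n ↦ a_{n+1}`,
so by Vieta's formulas `L_{r_1 … r_p}(a_n) = ∑_k (-1)^(p-k) E_{p-k} a_{n+k}`. After multiplication
by the exponential weight, the `k`-th term is `(-1)^(p-k) e^{iα(p-k)x} E_{p-k}` times the `n+k`-th
term of the given series, and these shifted series sum to the tails `ρ_k`.
-/

open Polynomial

theorem Finset.prod_X_sub_C_coeff {R ι : Type*} [CommRing R] (s : Finset ι) (r : ι → R) {k : ℕ}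
    (h : k ≤ #s) :
    (∏ i ∈ s, (X - C (r i))).coeff k =
      (-1) ^ (#s - k) * ∑ t ∈ s.powersetCard (#s - k), ∏ i ∈ t, r i := by
  have := (s.val.map r).prod_X_sub_C_coeff (k := k) (by simpa using h)
  rw [Multiset.map_map, Multiset.card_map, Finset.esymm_map_val] at this
  exact this

section Shift

variable (R : Type*) [CommSemiring R]

noncomputable def seqShift : Module.End R (ℕ → R) :=
  LinearMap.funLeft R R (· + 1)

variable {R}

theorem seqShift_pow_apply (k : ℕ) (a : ℕ → R) (n : ℕ) :
    (seqShift R ^ k) a n = a (n + k) := by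
  induction k generalizing a n with
  | zero => rfl
  | succ k ih =>
    rw [pow_succ, Module.End.mul_apply, ih]
    rfl

theorem aeval_seqShift_apply (q : R[X]) (a : ℕ → R) (n : ℕ) :
    aeval (seqShift R) q a n = ∑ k ∈ range (q.natDegree + 1), q.coeff k * a (n + k) := by
  simp [aeval_eq_sum_range, seqShift_pow_apply]

end Shift

theorem Lop_eq_aeval_seqShift (r : ℕ → ℂ) (p : ℕ) (a : ℕ → ℂ) :
    Lop r p a = aeval (seqShift ℂ) (∏ j ∈ Icc 1 p, (X - C (r j))) a := by
  induction p with
  | zero => ext n; simp [Lop]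
  | succ p ih =>
    rw [prod_Icc_succ_top (by omega), mul_comm, map_mul, Module.End.mul_apply, ← ih]
    ext n
    simp [Lop, seqShift]

theorem Lop_apply_eq_sum_esymm (r : ℕ → ℂ) (p : ℕ) (a : ℕ → ℂ) (n : ℕ) :
    Lop r p a n = ∑ k ∈ range (p + 1),
      (-1) ^ (p - k) * (∑ s ∈ (Icc 1 p).powersetCard (p - k), ∏ j ∈ s, r j) * a (n + k) := by
  have hdeg : (∏ j ∈ Icc 1 p, (X - C (r j))).natDegree = p := by
    rw [natDegree_finsetProd_X_sub_C_eq_card, Nat.card_Icc, Nat.add_sub_cancel]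
  rw [Lop_eq_aeval_seqShift, aeval_seqShift_apply, hdeg]
  refine sum_congr rfl fun k hk => ?_
  rw [Finset.prod_X_sub_C_coeff _ _ (by simpa [Nat.lt_succ_iff] using hk), Nat.card_Icc,
    Nat.add_sub_cancel]

theorem tendsto_sum_range_sum_mul_shift {R : Type*} [Semiring R] [TopologicalSpace R]
    [IsTopologicalSemiring R] {g ρ : ℕ → R}
    (hρ : ∀ m, Tendsto (fun N => ∑ n ∈ Ico m N, g n) atTop (nhds (ρ m))) (c : ℕ → R)
    (s : Finset ℕ) :
    Tendsto (fun N => ∑ n ∈ range N, ∑ k ∈ s, c k * g (n + k)) atTop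
      (nhds (∑ k ∈ s, c k * ρ k)) := by
  have hshift : ∀ k N, ∑ n ∈ range N, g (n + k) = ∑ n ∈ Ico k (N + k), g n := fun k N => by
    rw [sum_Ico_eq_sum_range, Nat.add_sub_cancel]
    simp only [add_comm]
  simp_rw [sum_comm (s := range _), ← mul_sum, hshift]
  exact tendsto_finsetSum s fun k _ =>
    ((hρ k).comp (tendsto_add_atTop_nat k)).const_mul (c k)

theorem stmt_8_general (a : ℕ → ℂ) (α β x : ℝ) (p : ℕ) (r : ℕ → ℂ)
    (ρ : ℕ → ℂ)
    (hρ : ∀ m, Tendsto (fun N => ∑ n ∈ Finset.Ico m N,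
      a (n + 1) * Complex.exp (((α * ((n : ℝ) + 1) + β) * x) * Complex.I)) atTop (nhds (ρ m))) :
    Tendsto (fun N => ∑ n ∈ range N,
      Lop r p a (n + 1) *
        Complex.exp (((α * (((n : ℝ) + 1) + (p : ℝ)) + β) * x) * Complex.I)) atTop
      (nhds (∑ k ∈ range (p + 1),
        (-1 : ℂ) ^ (p - k) * Complex.exp (((α * ((p : ℝ) - (k : ℝ))) * x) * Complex.I) *
          (∑ s ∈ (Finset.Icc 1 p).powersetCard (p - k), ∏ j ∈ s, r j) * ρ k)) := by
  have hexp : ∀ n k : ℕ,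
      Complex.exp (((α * (((n : ℝ) + 1) + (p : ℝ)) + β) * x) * Complex.I) =
        Complex.exp (((α * ((p : ℝ) - (k : ℝ))) * x) * Complex.I) *
          Complex.exp (((α * (((n + k : ℕ) : ℝ) + 1) + β) * x) * Complex.I) := fun n k => by
    rw [← Complex.exp_add]
    push_cast
    ring_nf
  refine (tendsto_sum_range_sum_mul_shift hρ _ (range (p + 1))).congr fun N => ?_
  refine sum_congr rfl fun n _ => ?_
  rw [Lop_apply_eq_sum_esymm, sum_mul]
  refine sum_congr rfl fun k _ => ?_
  rw [hexp n k, show n + 1 + k = n + k + 1 by omega]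
  ring

theorem stmt_8 (a : ℕ → ℂ) (α β x : ℝ) (p : ℕ) (hp : 1 ≤ p) (r : ℕ → ℂ)
    (ρ : ℕ → ℂ)
    (hρ : ∀ m, Tendsto (fun N => ∑ n ∈ Finset.Ico m N,
      a (n + 1) * Complex.exp (((α * ((n : ℝ) + 1) + β) * x) * Complex.I)) atTop (nhds (ρ m))) :
    Tendsto (fun N => ∑ n ∈ range N,
      Lop r p a (n + 1) *
        Complex.exp (((α * (((n : ℝ) + 1) + (p : ℝ)) + β) * x) * Complex.I)) atTop
      (nhds (∑ k ∈ range (p + 1),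
        (-1 : ℂ) ^ (p - k) * Complex.exp (((α * ((p : ℝ) - (k : ℝ))) * x) * Complex.I) *
          (∑ s ∈ (Finset.Icc 1 p).powersetCard (p - k), ∏ j ∈ s, r j) * ρ k)) :=
  stmt_8_general a α β x p r ρ hρ
end

section
/- Let $\alpha,x$ be real numbers with $\pi/2\le\alpha x\le3\pi/2$, and let $(r_n)_{n\ge1}$ be positive real numbers such that for some real $\lambda>1$ either $r_n=O(n^{-\lambda})$ or $1/r_n=O(n^{-\lambda})$ as $n\to\infty$. For integers $0\le k\le p$ define $t_{pk}=\Big(\prod_{j=1}^p(1-r_je^{i\alpha x})\Big)^{-1}(-1)^{p-k}e^{i(p-k)x}E_{p-k}^{(p)}$, where $E_m^{(p)}$ is the $m$-th elementary symmetric polynomial in $r_1,\dots,r_p$. Then there exists a constant $K$ such that $\sum_{k=0}^p|t_{pk}|\le K$ for every nonnegative integer $p$; moreover $\sum_{k=0}^p|t_{pk}|\le\Big|\prod_{j=1}^p(1-r_je^{i\alpha x})\Big|^{-1}\prod_{k=1}^p(1+r_k)$. -/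
open Filter Finset Asymptotics

/-- The Toeplitz coefficients
`t_{pk} = (∏_{j=1}^p (1 - r_j e^{iαx}))⁻¹ · (-1)^{p-k} e^{i(p-k)x} E_{p-k}^{(p)}`. -/
noncomputable def tcoef (α x : ℝ) (r : ℕ → ℝ) (p k : ℕ) : ℂ :=
  (∏ j ∈ Finset.Icc 1 p, (1 - (r j : ℂ) * Complex.exp ((α * x) * Complex.I)))⁻¹ *
    ((-1 : ℂ) ^ (p - k) * Complex.exp ((((p : ℝ) - (k : ℝ)) * x) * Complex.I) *
      ∑ s ∈ (Finset.Icc 1 p).powersetCard (p - k), ∏ j ∈ s, (r j : ℂ))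

/-!
Taking norms, `|t_{pk}| = |∏_j (1 - r_j e^{iαx})|⁻¹ E_{p-k}^{(p)}`, and the elementary symmetric
polynomials sum to `∏_j (1 + r_j)`, so the second claim even holds with equality. Since
`cos (αx) ≤ 0`, `|1 - r e^{iαx}|² ≥ 1 + r²`, whence `(1 + r) / |1 - r e^{iαx}| ≤ 1 + min (r, 1/r)`.
Either decay hypothesis makes `min (r_n, 1/r_n)` summable, so the products are bounded by
`exp ∑ₙ min (r_n, 1/r_n)`.
-/

theorem Finset.sum_range_sum_powersetCard_sub_eq_prod_one_add {ι R : Type*} [CommSemiring R]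
    (s : Finset ι) (f : ι → R) :
    ∑ k ∈ range (#s + 1), ∑ t ∈ s.powersetCard (#s - k), ∏ i ∈ t, f i = ∏ i ∈ s, (1 + f i) := by
  rw [prod_one_add, sum_powerset, ← sum_range_reflect]
  refine sum_congr rfl fun k hk => ?_
  rw [mem_range] at hk
  rw [show #s - (#s + 1 - 1 - k) = k by omega]

theorem norm_tcoef (α x : ℝ) (r : ℕ → ℝ) (p k : ℕ) (hr : ∀ j ∈ Icc 1 p, 0 ≤ r j) :
    ‖tcoef α x r p k‖ =
      ‖∏ j ∈ Icc 1 p, (1 - (r j : ℂ) * Complex.exp ((α * x) * Complex.I))‖⁻¹ *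
        ∑ t ∈ (Icc 1 p).powersetCard (p - k), ∏ j ∈ t, r j := by
  have hE : ∑ t ∈ (Icc 1 p).powersetCard (p - k), ∏ j ∈ t, (r j : ℂ) =
      ((∑ t ∈ (Icc 1 p).powersetCard (p - k), ∏ j ∈ t, r j : ℝ) : ℂ) := by
    push_cast; rfl
  have hE_nonneg : 0 ≤ ∑ t ∈ (Icc 1 p).powersetCard (p - k), ∏ j ∈ t, r j :=
    sum_nonneg fun t ht => prod_nonneg fun j hj => hr j ((mem_powersetCard.1 ht).1 hj)
  rw [tcoef, hE, norm_mul, norm_inv, norm_mul, norm_mul, Complex.norm_of_nonneg hE_nonneg]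
  simp [Complex.norm_exp]

theorem sum_norm_tcoef (α x : ℝ) (r : ℕ → ℝ) (p : ℕ) (hr : ∀ j ∈ Icc 1 p, 0 ≤ r j) :
    ∑ k ∈ range (p + 1), ‖tcoef α x r p k‖ =
      ‖∏ j ∈ Icc 1 p, (1 - (r j : ℂ) * Complex.exp ((α * x) * Complex.I))‖⁻¹ *
        ∏ j ∈ Icc 1 p, (1 + r j) := by
  simp_rw [norm_tcoef α x r p _ hr, ← mul_sum]
  congr 1
  simpa using sum_range_sum_powersetCard_sub_eq_prod_one_add (Icc 1 p) r

theorem Complex.norm_one_sub_mul_exp_mul_I_sq (r θ : ℝ) :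
    ‖1 - r * exp (θ * I)‖ ^ 2 = 1 - 2 * r * Real.cos θ + r ^ 2 := by
  rw [← Complex.normSq_eq_norm_sq, Complex.normSq_apply]
  simp only [sub_re, one_re, mul_re, ofReal_re, exp_ofReal_mul_I_re, ofReal_im,
    exp_ofReal_mul_I_im, sub_im, one_im, mul_im]
  nlinarith [Real.sin_sq_add_cos_sq θ]

theorem one_add_sq_le_one_add_min_inv_sq_mul {r : ℝ} (hr : 0 < r) :
    (1 + r) ^ 2 ≤ (1 + min r r⁻¹) ^ 2 * (1 + r ^ 2) := by
  rcases le_total r 1 with h | h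
  · rw [min_eq_left (h.trans ((one_le_inv₀ hr).2 h))]
    nlinarith [sq_nonneg (1 + r), sq_nonneg r]
  · rw [min_eq_right ((inv_le_one₀ hr).2 h |>.trans h)]
    have hrr : (1 + r⁻¹) * r = 1 + r := by field_simp; ring
    calc (1 + r) ^ 2 = (1 + r⁻¹) ^ 2 * r ^ 2 := by rw [← hrr]; ring
      _ ≤ (1 + r⁻¹) ^ 2 * (1 + r ^ 2) := by gcongr; linarith

theorem Complex.one_add_div_norm_one_sub_mul_exp_mul_I_le {r θ : ℝ} (hr : 0 < r)
    (hθ : Real.cos θ ≤ 0) :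
    (1 + r) / ‖1 - r * exp (θ * I)‖ ≤ 1 + min r r⁻¹ := by
  have hm : 0 < 1 + min r r⁻¹ := by positivity
  have key : 1 + r ≤ (1 + min r r⁻¹) * ‖1 - r * exp (θ * I)‖ := by
    refine le_of_sq_le_sq ?_ (by positivity)
    rw [mul_pow, norm_one_sub_mul_exp_mul_I_sq]
    nlinarith [one_add_sq_le_one_add_min_inv_sq_mul hr, mul_nonneg hr.le (neg_nonneg.2 hθ)]
  have hpos : 0 < ‖1 - r * exp (θ * I)‖ := by
    by_contra! h
    nlinarith [norm_nonneg (1 - r * exp (θ * I))]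
  rwa [div_le_iff₀ hpos]

theorem summable_min_abs_abs_inv {r : ℕ → ℝ} (h : Summable r ∨ Summable fun n => (r n)⁻¹) :
    Summable fun n => min |r n| |r n|⁻¹ := by
  rcases h with h | h
  · exact h.abs.of_nonneg_of_le (fun n => by positivity) fun n => min_le_left _ _
  · refine h.abs.of_nonneg_of_le (fun n => by positivity) fun n => ?_
    rw [abs_inv]
    exact min_le_right _ _

theorem Real.prod_one_add_le_exp_tsum {ι : Type*} {c : ι → ℝ} (hc : Summable c)
    (h0 : ∀ i, 0 ≤ c i) (s : Finset ι) : ∏ i ∈ s, (1 + c i) ≤ exp (∑' i, c i) :=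
  (prod_one_add_le_exp_sum s h0).trans (exp_le_exp.2 (hc.sum_le_tsum s fun i _ => h0 i))

theorem stmt_11 (α x : ℝ) (h1 : Real.pi / 2 ≤ α * x) (h2 : α * x ≤ 3 * Real.pi / 2)
    (r : ℕ → ℝ) (hr : ∀ n, 1 ≤ n → 0 < r n)
    (hlam : ∃ lam : ℝ, 1 < lam ∧
      (((fun n : ℕ => r n) =O[atTop] fun n : ℕ => (n : ℝ) ^ (-lam)) ∨
       ((fun n : ℕ => (r n)⁻¹) =O[atTop] fun n : ℕ => (n : ℝ) ^ (-lam)))) :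
    (∃ K : ℝ, ∀ p : ℕ, ∑ k ∈ range (p + 1), ‖tcoef α x r p k‖ ≤ K) ∧
    ∀ p : ℕ, ∑ k ∈ range (p + 1), ‖tcoef α x r p k‖ ≤
      (‖∏ j ∈ Finset.Icc 1 p,
        (1 - (r j : ℂ) * Complex.exp ((α * x) * Complex.I))‖)⁻¹ *
        ∏ j ∈ Finset.Icc 1 p, (1 + r j) := by
  have hsum (p : ℕ) := sum_norm_tcoef α x r p fun j hj => (hr j (mem_Icc.1 hj).1).le
  refine ⟨?_, fun p => (hsum p).le⟩
  obtain ⟨lam, hlam, hO⟩ := hlam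
  have hpow : Summable fun n : ℕ => (n : ℝ) ^ (-lam) := Real.summable_nat_rpow.2 (by linarith)
  have hc := summable_min_abs_abs_inv
    (hO.imp (summable_of_isBigO_nat hpow) (summable_of_isBigO_nat hpow))
  have hcos : Real.cos (α * x) ≤ 0 := Real.cos_nonpos_of_pi_div_two_le_of_le h1 (by linarith)
  -- the absolute values keep the terms nonnegative at `n = 0`, where `r` is unconstrained
  refine ⟨Real.exp (∑' n, min |r n| |r n|⁻¹), fun p => ?_⟩
  calc ∑ k ∈ range (p + 1), ‖tcoef α x r p k‖
      = ∏ j ∈ Icc 1 p, (1 + r j) / ‖1 - r j * Complex.exp (↑(α * x) * Complex.I)‖ := by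
        rw [hsum p, norm_prod, inv_mul_eq_div, prod_div_distrib]
        push_cast; rfl
    _ ≤ ∏ j ∈ Icc 1 p, (1 + min |r j| |r j|⁻¹) := by
        refine prod_le_prod (fun j hj => ?_) fun j hj => ?_
        · exact div_nonneg (by linarith [hr j (mem_Icc.1 hj).1]) (norm_nonneg _)
        · rw [abs_of_pos (hr j (mem_Icc.1 hj).1)]
          exact Complex.one_add_div_norm_one_sub_mul_exp_mul_I_le (hr j (mem_Icc.1 hj).1) hcos
    _ ≤ _ := Real.prod_one_add_le_exp_tsum hc (fun n => by positivity) _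
end

section
/- Let $(a_n)_{n\ge1}$ be complex numbers with $a_n\ne0$ for all sufficiently large $n$, and let $(r_n)_{n\ge1}$ be complex numbers such that for each $p\ge1$ one has $L_{r_1\dots r_p}(a_n)\ne0$ for all sufficiently large $n$, $r_1=\lim_{n\to\infty}a_{n+1}/a_n$, and $r_{p+1}=\lim_{n\to\infty}L_{r_1\dots r_p}(a_{n+1})/L_{r_1\dots r_p}(a_n)$ for $p=1,2,\dots$. Then for every $p\ge1$, $\lim_{n\to\infty}\dfrac{L_{r_1\dots r_p}(a_n)}{a_n}=0$. -/
open Filter Finset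

theorem stmt_13 (a : ℕ → ℂ) (ha : ∀ᶠ n in atTop, a n ≠ 0) (r : ℕ → ℂ)
    (hL : ∀ p, 1 ≤ p → ∀ᶠ n in atTop, Lop r p a n ≠ 0)
    (hr1 : Tendsto (fun n => a (n + 1) / a n) atTop (nhds (r 1)))
    (hrp : ∀ p, 1 ≤ p →
      Tendsto (fun n => Lop r p a (n + 1) / Lop r p a n) atTop (nhds (r (p + 1)))) :
    ∀ p, 1 ≤ p → Tendsto (fun n => Lop r p a n / a n) atTop (nhds 0) := by
  intro p hp
  induction p, hp using Nat.le_induction with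
  | base =>
      have key : Tendsto (fun n => a (n + 1) / a n - r 1) atTop (nhds (r 1 - r 1)) :=
        hr1.sub tendsto_const_nhds
      rw [sub_self] at key
      refine key.congr' ?_
      filter_upwards [ha] with n hn
      show a (n + 1) / a n - r 1 = Lop r 1 a n / a n
      simp only [Lop, sub_div, mul_div_assoc, div_self hn, mul_one]
  | succ p hp ih =>
      have key : Tendsto (fun n =>
          (Lop r p a (n + 1) / Lop r p a n - r (p + 1)) * (Lop r p a n / a n))
          atTop (nhds ((r (p + 1) - r (p + 1)) * 0)) :=
        ((hrp p hp).sub tendsto_const_nhds).mul ih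
      rw [sub_self, zero_mul] at key
      refine key.congr' ?_
      filter_upwards [hL p hp] with n hy
      show (Lop r p a (n + 1) / Lop r p a n - r (p + 1)) * (Lop r p a n / a n)
        = Lop r (p + 1) a n / a n
      show _ = (Lop r p a (n + 1) - r (p + 1) * Lop r p a n) / a n
      by_cases hz : a n = 0
      · simp [hz]
      · field_simp
end

section
/- Let $a,b$ be real numbers with $0<a<b$ and define $a_n=1/(a^n+b^n)$ for $n\ge1$. Define $r_1=1/b$ and $r_{p+1}=a^p/b^{p+1}$ for $p\ge1$. Then $\lim_{n\to\infty}\dfrac{a_{n+1}}{a_n}=\dfrac1b$ and for every $p\ge1$, $\lim_{n\to\infty}\dfrac{L_{r_1\dots r_p}(a_{n+1})}{L_{r_1\dots r_p}(a_n)}=\dfrac{a^p}{b^{p+1}}$. -/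
open Filter Finset

/-!
With `D m = α ^ m + β ^ m`, induction on `p` gives the closed form
`L_{r_1 … r_p}(a_n) = c_p α ^ (p n) / (D n ⋯ D (n + p))`: the choice `r_{p+1} = α ^ p / β ^ (p+1)`
makes the `β ^ n` terms cancel when one passes from `p` to `p + 1`, leaving one more factor `α ^ n`.
Consecutive terms therefore have ratio `α ^ p D n / D (n + p + 1)`, which tends to
`α ^ p / β ^ (p + 1)` since `(α / β) ^ n → 0` when `‖α‖ < ‖β‖`.
-/

open Topology

noncomputable section

section PowNorm

variable {𝕜 : Type*} [NormedField 𝕜] {α β : 𝕜}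

theorem pow_add_pow_ne_zero [CharZero 𝕜] (h : ‖α‖ < ‖β‖) (m : ℕ) : α ^ m + β ^ m ≠ 0 := by
  rcases eq_or_ne m 0 with rfl | hm
  · simp
  intro h0
  have : ‖β‖ ^ m = ‖α‖ ^ m := by
    rw [← norm_pow, ← norm_pow, eq_neg_of_add_eq_zero_right h0, norm_neg]
  exact h.ne' ((pow_left_inj₀ (norm_nonneg _) (norm_nonneg _) hm).1 this)

theorem pow_sub_pow_ne_zero (h : ‖α‖ < ‖β‖) {m : ℕ} (hm : m ≠ 0) : β ^ m - α ^ m ≠ 0 := by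
  intro h0
  have : ‖β‖ ^ m = ‖α‖ ^ m := by rw [← norm_pow, ← norm_pow, sub_eq_zero.1 h0]
  exact h.ne' ((pow_left_inj₀ (norm_nonneg _) (norm_nonneg _) hm).1 this)

theorem tendsto_pow_add_pow_div (h : ‖α‖ < ‖β‖) (k : ℕ) :
    Tendsto (fun n : ℕ => (α ^ n + β ^ n) / (α ^ (n + k) + β ^ (n + k))) atTop
      (𝓝 (1 / β ^ k)) := by
  have hβ : β ≠ 0 := norm_pos_iff.1 ((norm_nonneg α).trans_lt h)
  set t := α / β
  have ht : Tendsto (fun n : ℕ => t ^ n) atTop (𝓝 0) := by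
    refine tendsto_pow_atTop_nhds_zero_of_norm_lt_one ?_
    rwa [norm_div, div_lt_one (norm_pos_iff.2 hβ)]
  have hlim : Tendsto (fun n : ℕ => (t ^ n + 1) / ((t ^ n * t ^ k + 1) * β ^ k)) atTop
      (𝓝 ((0 + 1) / ((0 * t ^ k + 1) * β ^ k))) :=
    (ht.add_const 1).div ((ht.mul_const _).add_const 1 |>.mul_const _)
      (by simpa using pow_ne_zero k hβ)
  rw [zero_add, zero_mul, zero_add, one_mul] at hlim
  refine hlim.congr fun n => ?_
  have hαβ : ∀ m, α ^ m = t ^ m * β ^ m := fun m => by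
    rw [div_pow, div_mul_cancel₀ _ (pow_ne_zero m hβ)]
  rw [hαβ n, hαβ (n + k), pow_add, pow_add, ← mul_div_mul_left _ _ (pow_ne_zero n hβ)]
  ring

end PowNorm

namespace Lop

variable {α β : ℂ}

def denom (α β : ℂ) (p n : ℕ) : ℂ := ∏ k ∈ range (p + 1), (α ^ (n + k) + β ^ (n + k))

def coeff (α β : ℂ) (p : ℕ) : ℂ := ∏ j ∈ range p, α ^ j * (β ^ (j + 1) - α ^ (j + 1)) / β ^ (j + 1)

theorem denom_succ (p n : ℕ) :
    denom α β (p + 1) n = denom α β p n * (α ^ (n + p + 1) + β ^ (n + p + 1)) := by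
  rw [denom, prod_range_succ, ← add_assoc]; rfl

theorem denom_succ' (p n : ℕ) :
    denom α β (p + 1) n = denom α β p (n + 1) * (α ^ n + β ^ n) := by
  rw [denom, denom, prod_range_succ', add_zero]
  congr 1
  exact prod_congr rfl fun k _ => by rw [add_right_comm n, add_assoc]

theorem coeff_succ (p : ℕ) :
    coeff α β (p + 1) = coeff α β p * (α ^ p * (β ^ (p + 1) - α ^ (p + 1)) / β ^ (p + 1)) :=
  prod_range_succ _ _

theorem denom_ne_zero (hD : ∀ m, α ^ m + β ^ m ≠ 0) (p n : ℕ) : denom α β p n ≠ 0 :=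
  prod_ne_zero_iff.2 fun k _ => hD (n + k)

theorem coeff_ne_zero (hα : α ≠ 0) (h : ‖α‖ < ‖β‖) (p : ℕ) : coeff α β p ≠ 0 := by
  have hβ : β ≠ 0 := norm_pos_iff.1 ((norm_nonneg α).trans_lt h)
  exact prod_ne_zero_iff.2 fun j _ => div_ne_zero
    (mul_ne_zero (pow_ne_zero _ hα) (pow_sub_pow_ne_zero h j.succ_ne_zero)) (pow_ne_zero _ hβ)

variable {aa r : ℕ → ℂ}

theorem zero_apply (n : ℕ) : Lop r 0 aa n = aa n := rfl

theorem succ_apply (p n : ℕ) :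
    Lop r (p + 1) aa n = Lop r p aa (n + 1) - r (p + 1) * Lop r p aa n :=
  rfl

theorem eq_coeff_mul_div_denom (hβ : β ≠ 0) (hD : ∀ m, α ^ m + β ^ m ≠ 0)
    (haa : ∀ n, 1 ≤ n → aa n = 1 / (α ^ n + β ^ n))
    (hr : ∀ p, r (p + 1) = α ^ p / β ^ (p + 1)) (p : ℕ) {n : ℕ} (hn : 1 ≤ n) :
    Lop r p aa n = coeff α β p * α ^ (p * n) / denom α β p n := by
  induction p generalizing n with
  | zero => simp [zero_apply, coeff, denom, haa n hn]
  | succ p ih =>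
    have hP := denom_ne_zero hD (p + 1) n
    have hDn := hD n
    have hDnp := hD (n + p + 1)
    have hshift : coeff α β p * α ^ (p * (n + 1)) / denom α β p (n + 1) =
        coeff α β p * α ^ (p * (n + 1)) * (α ^ n + β ^ n) / denom α β (p + 1) n := by
      rw [denom_succ', mul_div_mul_right _ _ hDn]
    have hext : coeff α β p * α ^ (p * n) / denom α β p n =
        coeff α β p * α ^ (p * n) * (α ^ (n + p + 1) + β ^ (n + p + 1)) / denom α β (p + 1) n := by
      rw [denom_succ, mul_div_mul_right _ _ hDnp]
    rw [succ_apply, ih (by omega), ih hn, hshift, hext, hr, coeff_succ]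
    field_simp
    ring

theorem succ_div_eq (hα : α ≠ 0) (h : ‖α‖ < ‖β‖)
    (haa : ∀ n, 1 ≤ n → aa n = 1 / (α ^ n + β ^ n))
    (hr : ∀ p, r (p + 1) = α ^ p / β ^ (p + 1)) (p : ℕ) {n : ℕ} (hn : 1 ≤ n) :
    Lop r p aa (n + 1) / Lop r p aa n =
      α ^ p * ((α ^ n + β ^ n) / (α ^ (n + p + 1) + β ^ (n + p + 1))) := by
  have hβ : β ≠ 0 := norm_pos_iff.1 ((norm_nonneg α).trans_lt h)
  have hD := pow_add_pow_ne_zero h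
  have hc := coeff_ne_zero hα h p
  have hP := denom_ne_zero hD p n
  have hP' := denom_ne_zero hD p (n + 1)
  have hDnp := hD (n + p + 1)
  have hcross : denom α β p (n + 1) * (α ^ n + β ^ n) =
      denom α β p n * (α ^ (n + p + 1) + β ^ (n + p + 1)) := by
    rw [← denom_succ, denom_succ']
  rw [eq_coeff_mul_div_denom hβ hD haa hr p (by omega), eq_coeff_mul_div_denom hβ hD haa hr p hn]
  field_simp
  linear_combination (-(α ^ (p * n) * α ^ p)) * hcross

theorem tendsto_succ_div (hα : α ≠ 0) (h : ‖α‖ < ‖β‖)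
    (haa : ∀ n, 1 ≤ n → aa n = 1 / (α ^ n + β ^ n))
    (hr : ∀ p, r (p + 1) = α ^ p / β ^ (p + 1)) (p : ℕ) :
    Tendsto (fun n => Lop r p aa (n + 1) / Lop r p aa n) atTop (𝓝 (α ^ p / β ^ (p + 1))) := by
  have hlim := (tendsto_pow_add_pow_div h (p + 1)).const_mul (α ^ p)
  rw [mul_one_div] at hlim
  refine hlim.congr' ?_
  filter_upwards [eventually_ge_atTop 1] with n hn
  rw [succ_div_eq hα h haa hr p hn, add_assoc]

end Lop

end

theorem stmt_15 (a b : ℝ) (ha : 0 < a) (hab : a < b)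
    (aa : ℕ → ℂ) (haa : ∀ n, 1 ≤ n → aa n = 1 / ((a : ℂ) ^ n + (b : ℂ) ^ n))
    (r : ℕ → ℂ) (hr1 : r 1 = 1 / (b : ℂ))
    (hrp : ∀ p, 1 ≤ p → r (p + 1) = (a : ℂ) ^ p / (b : ℂ) ^ (p + 1)) :
    Tendsto (fun n => aa (n + 1) / aa n) atTop (nhds (1 / (b : ℂ))) ∧
    ∀ p, 1 ≤ p → Tendsto (fun n => Lop r p aa (n + 1) / Lop r p aa n) atTop
      (nhds ((a : ℂ) ^ p / (b : ℂ) ^ (p + 1))) := by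
  have hα : (a : ℂ) ≠ 0 := Complex.ofReal_ne_zero.2 ha.ne'
  have hnorm : ‖(a : ℂ)‖ < ‖(b : ℂ)‖ := by
    rwa [Complex.norm_real, Complex.norm_real, Real.norm_of_nonneg ha.le,
      Real.norm_of_nonneg (ha.trans hab).le]
  have hr : ∀ p, r (p + 1) = (a : ℂ) ^ p / (b : ℂ) ^ (p + 1) := fun
    | 0 => by simpa using hr1
    | p + 1 => hrp (p + 1) p.succ_pos
  refine ⟨?_, fun p _ => Lop.tendsto_succ_div hα hnorm haa hr p⟩
  simpa [Lop.zero_apply] using Lop.tendsto_succ_div hα hnorm haa hr 0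
end
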